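/- arXiv:2507.11187 — 3 statements merged into one kernel-verified Lean document; each statement's English description precedes it below -/
import Mathlib

section
/- Let A ⊆ I^d be measurable, X_1,…,X_n i.i.d. with distribution ρ, and N = #{i : X_i ∈ A}. Then for any natural number u, E[ 1_{N ≠ 0} / N^u ] ≤ (u+1)! · n! / ((n+u)! · ρ(A)^u). -/
/-!
The count `N` is binomial with parameters `n` and `p = ρ(A)`: by independence, the event that
exactly the samples indexed by `S` land in `A` has probability `p ^ #S * (1 - p) ^ (n - #S)`.
For `k ≥ 1`, `(k + 1) ⋯ (k + u) ≤ 2k ⋯ (u + 1)k` gives `1 / k ^ u ≤ (u + 1)! k! / (k + u)!`, and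
`C(n, k) k! / (k + u)! = n! / (n + u)! * C(n + u, k + u)`. Hence the expectation is at most
`(u + 1)! n! / ((n + u)! p ^ u)` times `∑ₖ C(n + u, k + u) p ^ (k + u) (1 - p) ^ (n - k)`, which is
part of the binomial expansion of `(p + (1 - p)) ^ (n + u) = 1`.
-/

open MeasureTheory ProbabilityTheory
open scoped Classical
open Nat

namespace Nat

theorem factorial_add_le_succ_factorial_mul (u : ℕ) {k : ℕ} (hk : k ≠ 0) :
    (k + u)! ≤ (u + 1)! * k ! * k ^ u := by
  induction u with
  | zero => simp
  | succ u ih =>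
    calc (k + (u + 1))! = (k + u + 1) * (k + u)! := Nat.factorial_succ _
      _ ≤ ((u + 2) * k) * ((u + 1)! * k ! * k ^ u) := by
          gcongr
          nlinarith [Nat.one_le_iff_ne_zero.2 hk]
      _ = (u + 2)! * k ! * k ^ (u + 1) := by
          rw [Nat.factorial_succ (u + 1)]; ring

theorem choose_mul_factorial_mul_factorial_add {n k : ℕ} (hk : k ≤ n) (u : ℕ) :
    n.choose k * k ! * (n + u)! = n ! * ((n + u).choose (k + u) * (k + u)!) := by
  have hn := Nat.choose_mul_factorial_mul_factorial hk
  have hnu := Nat.choose_mul_factorial_mul_factorial (Nat.add_le_add_right hk u)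
  rw [Nat.add_sub_add_right] at hnu
  rw [← hn, ← hnu]
  ring

end Nat

theorem inv_pow_mul_factorial_le (u : ℕ) {k : ℕ} (hk : k ≠ 0) :
    ((k : ℝ) ^ u)⁻¹ * (k + u)! ≤ (u + 1)! * k ! := by
  rw [inv_mul_le_iff₀ (by positivity)]
  exact_mod_cast (Nat.factorial_add_le_succ_factorial_mul u hk).trans_eq (by ring)

theorem sum_choose_add_mul_pow_le_one {p q : ℝ} (hp : 0 ≤ p) (hq : 0 ≤ q) (hpq : p + q = 1)
    (n u : ℕ) :
    ∑ k ∈ Finset.range (n + 1), p ^ (k + u) * q ^ (n - k) * (n + u).choose (k + u) ≤ 1 := by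
  have hbinom := (add_pow p q (u + n)).symm
  rw [hpq, one_pow, add_assoc, Finset.sum_range_add] at hbinom
  simp only [add_comm u, Nat.add_sub_add_right] at hbinom
  exact le_of_le_of_eq (le_add_of_nonneg_left (Finset.sum_nonneg fun _ _ => by positivity)) hbinom

theorem choose_mul_mul_factorial_le {n k : ℕ} (hk : k ≤ n) {u : ℕ} {x : ℝ}
    (hx : x * (k + u)! ≤ (u + 1)! * k !) :
    n.choose k * x * (n + u)! ≤ (u + 1)! * n ! * (n + u).choose (k + u) := by
  have hchoose : (n.choose k * k ! * (n + u)! : ℝ) = n ! * ((n + u).choose (k + u) * (k + u)!) := by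
    exact_mod_cast Nat.choose_mul_factorial_mul_factorial_add hk u
  rw [← mul_le_mul_iff_of_pos_right (show (0 : ℝ) < (k + u)! by positivity)]
  calc n.choose k * x * (n + u)! * (k + u)! = (x * (k + u)!) * (n.choose k * (n + u)!) := by ring
    _ ≤ ((u + 1)! * k !) * (n.choose k * (n + u)!) := by gcongr
    _ = (u + 1)! * n ! * (n + u).choose (k + u) * (k + u)! := by
      linear_combination ((u + 1)! : ℝ) * hchoose

theorem sum_choose_mul_pow_le {p q : ℝ} (hp : 0 ≤ p) (hq : 0 ≤ q) (hpq : p + q = 1)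
    (n u : ℕ) {f : ℕ → ℝ} (hf0 : f 0 = 0) (hf : ∀ k, f k * (k + u)! ≤ (u + 1)! * k !) :
    ∑ k ∈ Finset.range (n + 1), n.choose k * f k * p ^ k * q ^ (n - k)
      ≤ (u + 1)! * n ! / ((n + u)! * p ^ u) := by
  rcases hp.eq_or_lt with rfl | hp
  -- the right side is a division by zero, so `hf0` must make every term vanish
  · rw [Finset.sum_eq_zero fun k _ => by cases k <;> simp [hf0]]
    positivity
  rw [le_div_iff₀ (by positivity), Finset.sum_mul]
  calc ∑ k ∈ Finset.range (n + 1), n.choose k * f k * p ^ k * q ^ (n - k) * ((n + u)! * p ^ u)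
      ≤ ∑ k ∈ Finset.range (n + 1),
          (u + 1)! * n ! * (p ^ (k + u) * q ^ (n - k) * (n + u).choose (k + u)) := by
        refine Finset.sum_le_sum fun k hk => ?_
        have hterm := choose_mul_mul_factorial_le (Nat.lt_succ_iff.1 (Finset.mem_range.1 hk)) (hf k)
        calc n.choose k * f k * p ^ k * q ^ (n - k) * ((n + u)! * p ^ u)
            = (n.choose k * f k * (n + u)!) * (p ^ (k + u) * q ^ (n - k)) := by ring
          _ ≤ ((u + 1)! * n ! * (n + u).choose (k + u)) * (p ^ (k + u) * q ^ (n - k)) := by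
            gcongr
          _ = _ := by ring
    _ ≤ (u + 1)! * n ! * 1 := by
        rw [← Finset.mul_sum]
        gcongr
        exact sum_choose_add_mul_pow_le_one hp.le hq hpq n u
    _ = (u + 1)! * n ! := mul_one _

section HitSet

variable {Ω α ι : Type*} [Fintype ι] {X : ι → Ω → α} {A : Set α}

noncomputable def hitSet (X : ι → Ω → α) (A : Set α) (ω : Ω) : Finset ι :=
  Finset.univ.filter fun i => X i ω ∈ A

theorem setOf_hitSet_eq (S : Finset ι) :
    {ω | hitSet X A ω = S} = ⋂ i, X i ⁻¹' (if i ∈ S then A else Aᶜ) := by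
  ext ω
  simp only [Set.mem_ofPred_eq, Set.mem_iInter, Set.mem_preimage, Finset.ext_iff, hitSet,
    Finset.mem_filter, Finset.mem_univ, true_and]
  refine forall_congr' fun i => ?_
  split_ifs with hi <;> simp [hi]

variable [MeasurableSpace Ω] [MeasurableSpace α]

theorem measurableSet_hitSet_eq (hX : ∀ i, Measurable (X i)) (hA : MeasurableSet A)
    (S : Finset ι) : MeasurableSet {ω | hitSet X A ω = S} := by
  rw [setOf_hitSet_eq]
  exact .iInter fun i => hX i (by split_ifs; exacts [hA, hA.compl])

theorem measure_hitSet_eq {P : Measure Ω} {ρ : Measure α} (hindep : iIndepFun X P)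
    (hlaw : ∀ i, P.map (X i) = ρ) (hX : ∀ i, Measurable (X i)) (hA : MeasurableSet A)
    (S : Finset ι) :
    P {ω | hitSet X A ω = S} = ρ A ^ S.card * ρ Aᶜ ^ (Fintype.card ι - S.card) := by
  have hlaw' : ∀ i (B : Set α), MeasurableSet B → P (X i ⁻¹' B) = ρ B := fun i B hB => by
    rw [← hlaw i, Measure.map_apply (hX i) hB]
  have hprod := hindep.measure_inter_preimage_eq_mul Finset.univ
    (sets := fun i => if i ∈ S then A else Aᶜ) fun i _ => by split_ifs; exacts [hA, hA.compl]
  simp only [Finset.mem_univ, Set.iInter_true] at hprod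
  rw [setOf_hitSet_eq, hprod, Finset.prod_congr rfl fun i _ => show P (X i ⁻¹' _) =
    if i ∈ S then ρ A else ρ Aᶜ by split_ifs; exacts [hlaw' i A hA, hlaw' i Aᶜ hA.compl]]
  rw [Finset.prod_ite, Finset.prod_const, Finset.prod_const, Finset.filter_mem_eq_inter,
    Finset.univ_inter, Finset.filter_notMem_eq_sdiff, ← Finset.compl_eq_univ_sdiff,
    Finset.card_compl]

theorem integral_comp_card_hitSet {P : Measure Ω} [IsFiniteMeasure P]
    (hX : ∀ i, Measurable (X i)) (hA : MeasurableSet A) (g : ℕ → ℝ) :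
    ∫ ω, g (hitSet X A ω).card ∂P = ∑ S : Finset ι, g S.card * P.real {ω | hitSet X A ω = S} := by
  have hsum : ∀ ω, g (hitSet X A ω).card
      = ∑ S : Finset ι, {ω | hitSet X A ω = S}.indicator (fun _ => g S.card) ω := by
    intro ω
    simp [Set.indicator_apply]
  simp_rw [hsum]
  rw [integral_finsetSum _ fun S _ =>
    (integrable_const _).indicator (measurableSet_hitSet_eq hX hA S)]
  refine Finset.sum_congr rfl fun S _ => ?_
  rw [integral_indicator_const _ (measurableSet_hitSet_eq hX hA S), smul_eq_mul, mul_comm]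

theorem integral_comp_card_hitSet_eq_sum_choose {P : Measure Ω} [IsFiniteMeasure P]
    {ρ : Measure α} (hindep : iIndepFun X P) (hlaw : ∀ i, P.map (X i) = ρ)
    (hX : ∀ i, Measurable (X i)) (hA : MeasurableSet A) (g : ℕ → ℝ) :
    ∫ ω, g (hitSet X A ω).card ∂P
      = ∑ k ∈ Finset.range (Fintype.card ι + 1), (Fintype.card ι).choose k * g k
          * ρ.real A ^ k * ρ.real Aᶜ ^ (Fintype.card ι - k) := by
  simp_rw [integral_comp_card_hitSet hX hA, measureReal_def, measure_hitSet_eq hindep hlaw hX hA,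
    ENNReal.toReal_mul, ENNReal.toReal_pow, ← measureReal_def]
  rw [← Finset.powerset_univ, Finset.sum_powerset_apply_card
    (fun k => g k * (ρ.real A ^ k * ρ.real Aᶜ ^ (Fintype.card ι - k))), Finset.card_univ]
  simp only [nsmul_eq_mul, mul_assoc]

end HitSet

theorem inverse_moment_count_bound_general {Ω : Type*} [MeasurableSpace Ω] (P : Measure Ω)
    [IsProbabilityMeasure P] (d n : ℕ) (ρ : Measure (Fin d → ℝ)) [IsProbabilityMeasure ρ]
    (A : Set (Fin d → ℝ)) (hA : MeasurableSet A)
    (X : Fin n → Ω → (Fin d → ℝ)) (hXmeas : ∀ i, Measurable (X i))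
    (hXiid : iIndepFun X P)
    (hXlaw : ∀ i, Measure.map (X i) P = ρ) (u : ℕ) :
    ∫ ω, (if (Finset.univ.filter (fun i => X i ω ∈ A)).card ≠ 0 then
        (1 : ℝ) / ((Finset.univ.filter (fun i => X i ω ∈ A)).card : ℝ) ^ u else 0) ∂P
      ≤ ((u + 1).factorial * n.factorial : ℝ) /
        ((n + u).factorial * (ρ A).toReal ^ u) := by
  set g : ℕ → ℝ := fun k => if k ≠ 0 then 1 / (k : ℝ) ^ u else 0
  have hg : ∀ k, g k * (k + u)! ≤ (u + 1)! * k ! := fun k => by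
    by_cases hk : k = 0
    · simp [g, hk]
    · simpa [g, hk] using inv_pow_mul_factorial_le u hk
  have hpq : ρ.real A + ρ.real Aᶜ = 1 := by
    rw [measureReal_compl hA, probReal_univ, add_sub_cancel]
  calc ∫ ω, g (hitSet X A ω).card ∂P
      = ∑ k ∈ Finset.range (n + 1), n.choose k * g k * ρ.real A ^ k * ρ.real Aᶜ ^ (n - k) := by
        simpa using integral_comp_card_hitSet_eq_sum_choose hXiid hXlaw hXmeas hA g
    _ ≤ _ := sum_choose_mul_pow_le measureReal_nonneg measureReal_nonneg hpq n u (by simp [g]) hg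

/-- Inverse-moment bound for the number of i.i.d. samples falling in a set `A ⊆ I^d`:
if `X_1,…,X_n` are i.i.d. with distribution `ρ` and `N = #{i : X_i ∈ A}`, then for any
natural number `u`, `E[1_{N ≠ 0}/N^u] ≤ (u+1)!·n!/((n+u)!·ρ(A)^u)`. -/
theorem inverse_moment_count_bound {Ω : Type*} [MeasurableSpace Ω] (P : Measure Ω)
    [IsProbabilityMeasure P] (d n : ℕ) (ρ : Measure (Fin d → ℝ)) [IsProbabilityMeasure ρ]
    (a b : ℝ) (hab : a < b) (hsupp : ρ (Set.Icc (fun _ => a) (fun _ => b)) = 1)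
    (A : Set (Fin d → ℝ)) (hA : MeasurableSet A)
    (X : Fin n → Ω → (Fin d → ℝ)) (hXmeas : ∀ i, Measurable (X i))
    (hXiid : iIndepFun X P)
    (hXlaw : ∀ i, Measure.map (X i) P = ρ) (u : ℕ) :
    ∫ ω, (if (Finset.univ.filter (fun i => X i ω ∈ A)).card ≠ 0 then
        (1 : ℝ) / ((Finset.univ.filter (fun i => X i ω ∈ A)).card : ℝ) ^ u else 0) ∂P
      ≤ ((u + 1).factorial * n.factorial : ℝ) /
        ((n + u).factorial * (ρ A).toReal ^ u) :=
  inverse_moment_count_bound_general P d n ρ A hA X hXmeas hXiid hXlaw u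
end

section
/- Let B be a binomial random variable with parameters m and δ ∈ (0,1], and v ≥ 1 a natural number. Then Σ_{ℓ=1}^m (1/ℓ^{v-1}) · C(m,ℓ) δ^ℓ (1-δ)^{m-ℓ} ≤ v! · m! / ((m+v-1)! · δ^{v-1}). -/
open Finset

lemma fact_aux (w : ℕ) : ∀ ℓ : ℕ, 1 ≤ ℓ →
    (ℓ + w).factorial ≤ (w + 1).factorial * ℓ ^ w * ℓ.factorial := by
  induction w with
  | zero => intro ℓ hℓ; simp
  | succ w ih =>
    intro ℓ hℓ
    have h1 := ih ℓ hℓ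
    calc (ℓ + (w + 1)).factorial = (ℓ + w + 1) * (ℓ + w).factorial := by
          rw [← Nat.add_assoc, Nat.factorial_succ]
      _ ≤ (ℓ + w + 1) * ((w + 1).factorial * ℓ ^ w * ℓ.factorial) :=
          Nat.mul_le_mul_left _ h1
      _ ≤ ((w + 2) * ℓ) * ((w + 1).factorial * ℓ ^ w * ℓ.factorial) := by
          apply Nat.mul_le_mul_right
          nlinarith
      _ = (w + 2).factorial * ℓ ^ (w + 1) * ℓ.factorial := by
          have h2 : (w + 2).factorial = (w + 2) * (w + 1).factorial := rfl
          rw [h2]; ring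

lemma key_nat (m w ℓ : ℕ) (h1 : 1 ≤ ℓ) (h2 : ℓ ≤ m) :
    (m + w).factorial * m.choose ℓ ≤
      (w + 1).factorial * m.factorial * ((m + w).choose (ℓ + w)) * ℓ ^ w := by
  have hc : (m + w).choose (ℓ + w) * (ℓ + w).factorial * (m - ℓ).factorial
      = (m + w).factorial := by
    have := Nat.choose_mul_factorial_mul_factorial
      (show ℓ + w ≤ m + w from Nat.add_le_add_right h2 w)
    simpa [Nat.add_sub_add_right] using this
  have hm : m.choose ℓ * ℓ.factorial * (m - ℓ).factorial = m.factorial :=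
    Nat.choose_mul_factorial_mul_factorial h2
  calc (m + w).factorial * m.choose ℓ
      = (m + w).choose (ℓ + w) * (ℓ + w).factorial * (m - ℓ).factorial * m.choose ℓ := by
        rw [hc]
    _ ≤ (m + w).choose (ℓ + w) * ((w + 1).factorial * ℓ ^ w * ℓ.factorial)
          * (m - ℓ).factorial * m.choose ℓ := by
        gcongr
        exact fact_aux w ℓ h1
    _ = (w + 1).factorial * (m.choose ℓ * ℓ.factorial * (m - ℓ).factorial)
          * ((m + w).choose (ℓ + w)) * ℓ ^ w := by ring
    _ = (w + 1).factorial * m.factorial * ((m + w).choose (ℓ + w)) * ℓ ^ w := by rw [hm]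

/-- Inverse-power moment bound for a binomial random variable with parameters `m` and
`δ ∈ (0,1]`: for `v ≥ 1`,
`Σ_{ℓ=1}^m (1/ℓ^{v-1})·C(m,ℓ)·δ^ℓ·(1-δ)^{m-ℓ} ≤ v!·m!/((m+v-1)!·δ^{v-1})`. -/
theorem binomial_inverse_power_moment_bound (m v : ℕ) (hv : 1 ≤ v) (δ : ℝ)
    (hδ0 : 0 < δ) (hδ1 : δ ≤ 1) :
    ∑ ℓ ∈ Finset.Icc 1 m,
        (1 / (ℓ : ℝ) ^ (v - 1)) * (m.choose ℓ : ℝ) * δ ^ ℓ * (1 - δ) ^ (m - ℓ)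
      ≤ (v.factorial * m.factorial : ℝ) / ((m + v - 1).factorial * δ ^ (v - 1)) := by
  obtain ⟨w, rfl⟩ : ∃ w, v = w + 1 := ⟨v - 1, (Nat.succ_pred_eq_of_pos hv).symm⟩
  have hm1 : m + (w + 1) - 1 = m + w := by omega
  have hw1 : w + 1 - 1 = w := by omega
  rw [hm1, hw1]
  have h1δ : (0:ℝ) ≤ 1 - δ := by linarith
  have hδw : (0:ℝ) < δ ^ w := pow_pos hδ0 w
  have hfpos : (0:ℝ) < ((m + w).factorial : ℝ) := by
    exact_mod_cast Nat.factorial_pos _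
  set K : ℝ := ((w + 1).factorial * m.factorial : ℝ) with hK
  have hK0 : 0 ≤ K := by positivity
  -- termwise bound
  have hterm : ∀ ℓ ∈ Finset.Icc 1 m,
      (1 / (ℓ : ℝ) ^ w) * (m.choose ℓ : ℝ) * δ ^ ℓ * (1 - δ) ^ (m - ℓ)
      ≤ (K / ((m + w).factorial : ℝ)) *
          (((m + w).choose (ℓ + w) : ℝ) * δ ^ ℓ * (1 - δ) ^ (m - ℓ)) := by
    intro ℓ hℓ
    simp only [Finset.mem_Icc] at hℓ
    have hℓpos : (0:ℝ) < (ℓ : ℝ) ^ w := by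
      have : (0:ℝ) < (ℓ : ℝ) := by exact_mod_cast hℓ.1
      positivity
    have key : (((m + w).factorial : ℝ)) * (m.choose ℓ : ℝ) ≤
        K * ((m + w).choose (ℓ + w) : ℝ) * (ℓ : ℝ) ^ w := by
      have := key_nat m w ℓ hℓ.1 hℓ.2
      rw [hK]
      exact_mod_cast this
    have hbase : (1 / (ℓ : ℝ) ^ w) * (m.choose ℓ : ℝ)
        ≤ (K / ((m + w).factorial : ℝ)) * ((m + w).choose (ℓ + w) : ℝ) := by
      rw [div_mul_eq_mul_div, div_mul_eq_mul_div, div_le_div_iff₀ hℓpos hfpos]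
      nlinarith [key]
    have hnn : (0:ℝ) ≤ δ ^ ℓ * (1 - δ) ^ (m - ℓ) := by positivity
    calc (1 / (ℓ : ℝ) ^ w) * (m.choose ℓ : ℝ) * δ ^ ℓ * (1 - δ) ^ (m - ℓ)
        = ((1 / (ℓ : ℝ) ^ w) * (m.choose ℓ : ℝ)) * (δ ^ ℓ * (1 - δ) ^ (m - ℓ)) := by ring
      _ ≤ ((K / ((m + w).factorial : ℝ)) * ((m + w).choose (ℓ + w) : ℝ)) *
            (δ ^ ℓ * (1 - δ) ^ (m - ℓ)) := by
          exact mul_le_mul_of_nonneg_right hbase hnn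
      _ = (K / ((m + w).factorial : ℝ)) *
            (((m + w).choose (ℓ + w) : ℝ) * δ ^ ℓ * (1 - δ) ^ (m - ℓ)) := by ring
  have hsum1 := Finset.sum_le_sum hterm
  -- bound the shifted binomial sum
  have hS : δ ^ w * ∑ ℓ ∈ Finset.Icc 1 m,
      (((m + w).choose (ℓ + w) : ℝ) * δ ^ ℓ * (1 - δ) ^ (m - ℓ)) ≤ 1 := by
    have hrw : δ ^ w * ∑ ℓ ∈ Finset.Icc 1 m,
        (((m + w).choose (ℓ + w) : ℝ) * δ ^ ℓ * (1 - δ) ^ (m - ℓ))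
        = ∑ j ∈ Finset.Icc (1 + w) (m + w),
            δ ^ j * (1 - δ) ^ (m + w - j) * ((m + w).choose j : ℝ) := by
      rw [Finset.mul_sum, ← Finset.map_add_right_Icc 1 m w, Finset.sum_map]
      apply Finset.sum_congr rfl
      intro ℓ hℓ
      simp only [Finset.mem_Icc] at hℓ
      simp only [addRightEmbedding_apply]
      have h1 : m + w - (ℓ + w) = m - ℓ := by omega
      rw [h1, pow_add]
      ring
    rw [hrw]
    have hsub : Finset.Icc (1 + w) (m + w) ⊆ Finset.range (m + w + 1) := by
      intro j hj
      simp only [Finset.mem_Icc] at hj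
      simp only [Finset.mem_range]
      omega
    have h2 : ∑ j ∈ Finset.Icc (1 + w) (m + w),
        δ ^ j * (1 - δ) ^ (m + w - j) * ((m + w).choose j : ℝ)
        ≤ ∑ j ∈ Finset.range (m + w + 1),
            δ ^ j * (1 - δ) ^ (m + w - j) * ((m + w).choose j : ℝ) := by
      apply Finset.sum_le_sum_of_subset_of_nonneg hsub
      intro j _ _
      positivity
    have h3 : ∑ j ∈ Finset.range (m + w + 1),
        δ ^ j * (1 - δ) ^ (m + w - j) * ((m + w).choose j : ℝ) = 1 := by
      have := add_pow δ (1 - δ) (m + w)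
      simp only [add_sub_cancel, one_pow] at this
      linarith [this.symm]
    linarith
  -- combine
  have hSle : ∑ ℓ ∈ Finset.Icc 1 m,
      (((m + w).choose (ℓ + w) : ℝ) * δ ^ ℓ * (1 - δ) ^ (m - ℓ)) ≤ 1 / δ ^ w := by
    rw [le_div_iff₀ hδw]
    linarith [hS]
  calc ∑ ℓ ∈ Finset.Icc 1 m,
        (1 / (ℓ : ℝ) ^ w) * (m.choose ℓ : ℝ) * δ ^ ℓ * (1 - δ) ^ (m - ℓ)
      ≤ ∑ ℓ ∈ Finset.Icc 1 m, (K / ((m + w).factorial : ℝ)) *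
          (((m + w).choose (ℓ + w) : ℝ) * δ ^ ℓ * (1 - δ) ^ (m - ℓ)) := hsum1
    _ = (K / ((m + w).factorial : ℝ)) * ∑ ℓ ∈ Finset.Icc 1 m,
          (((m + w).choose (ℓ + w) : ℝ) * δ ^ ℓ * (1 - δ) ^ (m - ℓ)) := by
        rw [Finset.mul_sum]
    _ ≤ (K / ((m + w).factorial : ℝ)) * (1 / δ ^ w) := by
        apply mul_le_mul_of_nonneg_left hSle
        positivity
    _ = K / (((m + w).factorial : ℝ) * δ ^ w) := by
        field_simp
end

section
/- Let m ≥ 1, δ ∈ (0,1], and consider m i.i.d. Bernoulli(δ) indicators I_1,…,I_m with S = Σ_j I_j. Then Σ_{j=1}^m E[I_j / S^v] = E[1_{S>0}/S^{v-1}] ≤ v!·m!/((m+v-1)!·δ^{v-1}), where I_j/S^v := 0 when S = 0. -/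
/-!
Since `∑ j, I j = S`, the summands add up pointwise to `1 / S ^ (v - 1)` on `{S ≠ 0}`. The random
set `{j | I j = 1}` is a product of independent `δ`-coins, so `S` has law `Bin(m, δ)`. Writing
`w = v - 1`, the bound `(k + 1) ⋯ (k + w) ≤ (w + 1)! k ^ w` for `k ≥ 1` gives
`C(m, k) / k ^ w ≤ (w + 1)! m! / (m + w)! · C(m + w, k + w)`, so after multiplying by
`δ ^ k (1 - δ) ^ (m - k)` the inverse moment is at most `(w + 1)! m! / ((m + w)! δ ^ w)` times
part of the binomial expansion of `(δ + (1 - δ)) ^ (m + w) = 1`.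
-/

open MeasureTheory ProbabilityTheory
open scoped Nat ENNReal

theorem Nat.factorial_add_le_factorial_mul_pow {k : ℕ} (hk : 0 < k) (w : ℕ) :
    (k + w)! ≤ k ! * ((w + 1)! * k ^ w) := by
  rw [← Nat.factorial_mul_ascFactorial]
  gcongr
  refine Nat.le_of_mul_le_mul_left ?_ hk
  calc k * (k + 1).ascFactorial w = k.ascFactorial (w + 1) := by
        rw [Nat.succ_ascFactorial, Nat.ascFactorial_succ]
    _ ≤ (w + 1)! * k ^ (w + 1) := Nat.ascFactorial_le_factorial_mul_pow k (w + 1)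
    _ = k * ((w + 1)! * k ^ w) := by ring

theorem Nat.choose_mul_factorial_add_le {n k : ℕ} (hk : 0 < k) (hkn : k ≤ n) (w : ℕ) :
    n.choose k * (n + w)! ≤ (w + 1)! * n ! * ((n + w).choose (k + w) * k ^ w) := by
  have hbig := Nat.choose_mul_factorial_mul_factorial (Nat.add_le_add_right hkn w)
  rw [Nat.add_sub_add_right] at hbig
  rw [← hbig, ← Nat.choose_mul_factorial_mul_factorial hkn]
  calc n.choose k * ((n + w).choose (k + w) * (k + w)! * (n - k)!)
      ≤ n.choose k * ((n + w).choose (k + w) * (k ! * ((w + 1)! * k ^ w)) * (n - k)!) := by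
        gcongr
        exact Nat.factorial_add_le_factorial_mul_pow hk w
    _ = (w + 1)! * (n.choose k * k ! * (n - k)!) * ((n + w).choose (k + w) * k ^ w) := by ring

theorem sum_Iic_choose_add_mul_pow_le (n w : ℕ) {x y : ℝ} (hx : 0 ≤ x) (hy : 0 ≤ y) :
    ∑ k ∈ Finset.Iic n, x ^ (k + w) * y ^ (n - k) * (n + w).choose (k + w) ≤
      (x + y) ^ (n + w) := by
  have hshift : ∑ k ∈ Finset.Iic n, x ^ (k + w) * y ^ (n - k) * (n + w).choose (k + w) =
      ∑ j ∈ (Finset.Iic n).map (addRightEmbedding w),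
        x ^ j * y ^ (n + w - j) * (n + w).choose j := by
    simp [Finset.sum_map, Nat.add_sub_add_right]
  rw [hshift, add_pow]
  refine Finset.sum_le_sum_of_subset_of_nonneg ?_ fun _ _ _ ↦ by positivity
  intro j
  simp only [Finset.mem_map, Finset.mem_Iic, addRightEmbedding_apply, Finset.mem_range]
  omega

theorem choose_mul_pow_mul_pow_div_pow_le {n k : ℕ} (hk : 0 < k) (hkn : k ≤ n) (w : ℕ)
    {x y : ℝ} (hx : 0 < x) (hy : 0 ≤ y) :
    n.choose k * x ^ k * y ^ (n - k) / (k : ℝ) ^ w ≤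
      (w + 1)! * n ! / ((n + w)! * x ^ w) *
        (x ^ (k + w) * y ^ (n - k) * (n + w).choose (k + w)) := by
  have key : (n.choose k * (n + w)! : ℝ) ≤
      (w + 1)! * n ! * ((n + w).choose (k + w) * k ^ w) := by
    exact_mod_cast Nat.choose_mul_factorial_add_le hk hkn w
  calc n.choose k * x ^ k * y ^ (n - k) / (k : ℝ) ^ w
      = (n.choose k * (n + w)! : ℝ) * (x ^ k * y ^ (n - k)) / ((n + w)! * k ^ w) := by
        field_simp
    _ ≤ ((w + 1)! * n ! * ((n + w).choose (k + w) * k ^ w)) * (x ^ k * y ^ (n - k)) /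
          ((n + w)! * k ^ w) := by
        gcongr
    _ = _ := by
        field_simp
        ring

theorem Set.ncard_setOf_eq_one_eq_sum {ι : Type*} [Fintype ι] {x : ι → ℕ}
    (hx : ∀ i, x i ≤ 1) :
    {i | x i = 1}.ncard = ∑ i, x i := by
  classical
  rw [Set.ncard_eq_toFinset_card', Set.toFinset_ofPred, Finset.card_filter]
  exact Finset.sum_congr rfl fun i _ ↦ by grind

theorem sum_ite_div_pow_sum {ι : Type*} [Fintype ι] (x : ι → ℕ) {v : ℕ} (hv : 1 ≤ v) :
    ∑ j, (if ∑ i, x i ≠ 0 then (x j : ℝ) / ((∑ i, x i : ℕ) : ℝ) ^ v else 0) =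
      if ∑ i, x i ≠ 0 then 1 / ((∑ i, x i : ℕ) : ℝ) ^ (v - 1) else 0 := by
  split_ifs with h
  · obtain ⟨w, rfl⟩ : ∃ w, v = w + 1 := ⟨v - 1, by omega⟩
    have h' : ((∑ i, x i : ℕ) : ℝ) ≠ 0 := by exact_mod_cast h
    rw [← Finset.sum_div, ← Nat.cast_sum, Nat.add_sub_cancel, pow_succ]
    field_simp
  · simp

namespace ProbabilityTheory

section Binomial

open _root_.unitInterval

variable {Ω ι : Type*} [MeasurableSpace Ω] {P : Measure Ω} [IsProbabilityMeasure P] {p : I}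

-- The right-hand side is the coordinate factor of `setBer(Set.univ, p)` (`setBernoulli_eq_map`).
theorem map_eq_one_eq_bernoulli {X : Ω → ℕ} (hX : Measurable X)
    (hlaw : P {ω | X ω = 1} = ENNReal.ofReal p) :
    P.map (fun ω ↦ X ω = 1) =
      toNNReal p • Measure.dirac True + toNNReal (σ p) • Measure.dirac False := by
  rw [← coe_toNNReal p, ENNReal.ofReal_coe_nnreal] at hlaw
  have hmeas : Measurable (fun ω ↦ X ω = 1) := (Measurable.of_discrete (f := (· = 1))).comp hX
  refine Measure.ext_of_singleton fun a ↦ ?_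
  rw [Measure.map_apply hmeas (measurableSet_singleton a)]
  by_cases ha : a
  · simpa [eq_true ha]
  · have hsum : (toNNReal p : ℝ≥0∞) + toNNReal (σ p) = 1 := by
      rw [← ENNReal.coe_add, toNNReal_add_toNNReal_symm, ENNReal.coe_one]
    simp only [eq_false ha, Set.preimage, Set.mem_singleton_iff, eq_iff_iff, iff_false]
    have hset : MeasurableSet {ω | X ω = 1} := hX (measurableSet_singleton 1)
    rw [← Set.compl_ofPred, prob_compl_eq_one_sub hset, hlaw, ← hsum,
      ENNReal.add_sub_cancel_left (by simp)]
    simp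

theorem isSetBernoulli_setOf_eq_one {X : ι → Ω → ℕ} (hX : ∀ i, Measurable (X i))
    (hind : iIndepFun X P) (hlaw : ∀ i, P {ω | X i ω = 1} = ENNReal.ofReal p) :
    IsSetBernoulli (fun ω ↦ {i | X i ω = 1}) Set.univ p P := by
  have hB : Measurable fun ω i ↦ X i ω = 1 :=
    measurable_pi_lambda _ fun i ↦ (Measurable.of_discrete (f := (· = 1))).comp (hX i)
  have hindB : iIndepFun (fun i ω ↦ X i ω = 1) P :=
    hind.comp (fun _ n ↦ n = 1) fun _ ↦ .of_discrete
  have hset : Measurable fun q : ι → Prop ↦ {i | q i} := MeasurableEquiv.setOfPred.measurable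
  refine ⟨(hset.comp hB).aemeasurable, ?_⟩
  rw [show (fun ω ↦ {i | X i ω = 1}) = (fun q : ι → Prop ↦ {i | q i}) ∘ fun ω i ↦ X i ω = 1
    from rfl, ← Measure.map_map hset hB, hindB.map_fun_eq_infinitePi_map₀ hB.aemeasurable,
    setBernoulli_eq_map]
  congr 2 with i : 1
  simp [map_eq_one_eq_bernoulli (hX i) (hlaw i)]

theorem map_ncard_setBernoulli_univ [Fintype ι] :
    setBer((Set.univ : Set ι), p).map Set.ncard = Bin(Fintype.card ι, p) := by
  refine Measure.ext_of_singleton fun k ↦ ?_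
  rw [map_ncard_setBernoulli_singleton Set.finite_univ, binomial_singleton, Set.ncard_univ,
    Nat.card_eq_fintype_card]

theorem hasLaw_sum_binomial [Fintype ι] {X : ι → Ω → ℕ} (hX : ∀ i, Measurable (X i))
    (hX01 : ∀ i ω, X i ω ≤ 1) (hind : iIndepFun X P)
    (hlaw : ∀ i, P {ω | X i ω = 1} = ENNReal.ofReal p) :
    HasLaw (fun ω ↦ ∑ i, X i ω) Bin(Fintype.card ι, p) P := by
  have hncard : HasLaw Set.ncard Bin(Fintype.card ι, p) setBer((Set.univ : Set ι), p) :=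
    ⟨Measurable.of_discrete.aemeasurable, map_ncard_setBernoulli_univ⟩
  convert hncard.comp (isSetBernoulli_setOf_eq_one hX hind hlaw) using 1
  ext ω
  exact (Set.ncard_setOf_eq_one_eq_sum fun i ↦ hX01 i ω).symm

theorem integral_inv_pow_binomial_le (n w : ℕ) (hp : 0 < (p : ℝ)) :
    ∫ k, (if k ≠ 0 then (1 : ℝ) / (k : ℝ) ^ w else 0) ∂Bin(n, p) ≤
      (w + 1)! * n ! / ((n + w)! * (p : ℝ) ^ w) := by
  have hq : 0 ≤ 1 - (p : ℝ) := by simp [p.2.2]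
  set K : ℝ := (w + 1)! * n ! / ((n + w)! * (p : ℝ) ^ w)
  have hterm : ∀ k ∈ Finset.Iic n,
      (n.choose k * (p : ℝ) ^ k * (1 - p) ^ (n - k)) •
          (if k ≠ 0 then (1 : ℝ) / (k : ℝ) ^ w else 0)
        ≤ K * ((p : ℝ) ^ (k + w) * (1 - p) ^ (n - k) * (n + w).choose (k + w)) := by
    intro k hkn
    rcases Nat.eq_zero_or_pos k with rfl | hk
    · simp only [ne_eq, not_true_eq_false, if_false, smul_zero]
      positivity
    rw [if_pos hk.ne', smul_eq_mul, ← mul_div_assoc, mul_one]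
    exact choose_mul_pow_mul_pow_div_pow_le hk (Finset.mem_Iic.mp hkn) w hp hq
  rw [integral_binomial]
  calc _ ≤ ∑ k ∈ Finset.Iic n,
        K * ((p : ℝ) ^ (k + w) * (1 - p) ^ (n - k) * (n + w).choose (k + w)) :=
        Finset.sum_le_sum hterm
    _ ≤ K * ((p : ℝ) + (1 - p)) ^ (n + w) := by
        rw [← Finset.mul_sum]
        gcongr
        exact sum_Iic_choose_add_mul_pow_le n w p.2.1 hq
    _ = K := by simp

end Binomial

end ProbabilityTheory

section InverseMoment

variable {Ω ι : Type*} [MeasurableSpace Ω] {P : Measure Ω} [Fintype ι]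
  {X : ι → Ω → ℕ} {v : ℕ}

theorem integrable_ite_div_pow_sum [IsFiniteMeasure P] (hX : ∀ i, Measurable (X i)) (j : ι)
    (hv : 1 ≤ v) :
    Integrable (fun ω ↦
      if ∑ i, X i ω ≠ 0 then (X j ω : ℝ) / ((∑ i, X i ω : ℕ) : ℝ) ^ v else 0) P := by
  have hmeas : Measurable fun ω ↦ (X j ω, ∑ i, X i ω) := (hX j).prodMk (by fun_prop)
  refine .of_bound ((Measurable.of_discrete (f := fun q : ℕ × ℕ ↦
    if q.2 ≠ 0 then (q.1 : ℝ) / (q.2 : ℝ) ^ v else 0)).comp hmeas).aestronglyMeasurable 1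
    (.of_forall fun ω ↦ ?_)
  split_ifs with h
  · have hsum : 1 ≤ ((∑ i, X i ω : ℕ) : ℝ) := by exact_mod_cast Nat.one_le_iff_ne_zero.mpr h
    have hj : (X j ω : ℝ) ≤ ((∑ i, X i ω : ℕ) : ℝ) := by
      exact_mod_cast Finset.single_le_sum (fun i _ ↦ Nat.zero_le (X i ω)) (Finset.mem_univ j)
    rw [Real.norm_of_nonneg (by positivity)]
    exact div_le_one_of_le₀ (hj.trans (le_self_pow₀ hsum (by omega))) (by positivity)
  · simp

theorem sum_integral_ite_div_pow_sum [IsFiniteMeasure P] (hX : ∀ i, Measurable (X i))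
    (hv : 1 ≤ v) :
    ∑ j, ∫ ω, (if ∑ i, X i ω ≠ 0 then (X j ω : ℝ) / ((∑ i, X i ω : ℕ) : ℝ) ^ v else 0) ∂P
      = ∫ ω, (if ∑ i, X i ω ≠ 0 then 1 / ((∑ i, X i ω : ℕ) : ℝ) ^ (v - 1) else 0) ∂P := by
  rw [← integral_finsetSum _ fun j _ ↦ integrable_ite_div_pow_sum hX j hv]
  congr 1 with ω
  exact sum_ite_div_pow_sum (X · ω) hv

end InverseMoment

theorem bernoulli_sum_inverse_moment_general {Ω : Type*} [MeasurableSpace Ω] (P : Measure Ω)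
    [IsProbabilityMeasure P] (m v : ℕ) (hv : 1 ≤ v) (δ : ℝ)
    (hδ0 : 0 < δ) (hδ1 : δ ≤ 1)
    (I : Fin m → Ω → ℕ) (hImeas : ∀ j, Measurable (I j)) (hIbdd : ∀ j ω, I j ω ≤ 1)
    (hIiid : iIndepFun I P)
    (hIlaw : ∀ j, P {ω | I j ω = 1} = ENNReal.ofReal δ)
    (S : Ω → ℕ) (hS : ∀ ω, S ω = ∑ j, I j ω) :
    (∑ j, ∫ ω, (if S ω ≠ 0 then (I j ω : ℝ) / (S ω : ℝ) ^ v else 0) ∂P)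
        = ∫ ω, (if S ω ≠ 0 then (1 : ℝ) / (S ω : ℝ) ^ (v - 1) else 0) ∂P ∧
      ∫ ω, (if S ω ≠ 0 then (1 : ℝ) / (S ω : ℝ) ^ (v - 1) else 0) ∂P
        ≤ (v.factorial * m.factorial : ℝ) / ((m + v - 1).factorial * δ ^ (v - 1)) := by
  obtain rfl : S = fun ω ↦ ∑ j, I j ω := funext hS
  refine ⟨sum_integral_ite_div_pow_sum hImeas hv, ?_⟩
  obtain ⟨w, rfl⟩ : ∃ w, v = w + 1 := ⟨v - 1, by omega⟩
  let p : unitInterval := ⟨δ, hδ0.le, hδ1⟩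
  have hbin : HasLaw (fun ω ↦ ∑ j, I j ω) (binomial m p) P := by
    simpa using hasLaw_sum_binomial (p := p) hImeas hIbdd hIiid hIlaw
  calc _ = ∫ k, (if k ≠ 0 then (1 : ℝ) / (k : ℝ) ^ w else 0) ∂(binomial m p) :=
        hbin.integral_comp Measurable.of_discrete.aestronglyMeasurable
    _ ≤ (w + 1)! * m ! / ((m + w)! * δ ^ w) := integral_inv_pow_binomial_le m w hδ0
    _ = _ := by simp

/-- For `m` i.i.d. Bernoulli(δ) indicators `I_1,…,I_m` with `S = Σ_j I_j` and `v ≥ 1`,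
`Σ_{j=1}^m E[I_j/S^v] = E[1_{S>0}/S^{v-1}] ≤ v!·m!/((m+v-1)!·δ^{v-1})`,
with the convention `I_j/S^v := 0` when `S = 0`. -/
theorem bernoulli_sum_inverse_moment {Ω : Type*} [MeasurableSpace Ω] (P : Measure Ω)
    [IsProbabilityMeasure P] (m v : ℕ) (hm : 1 ≤ m) (hv : 1 ≤ v) (δ : ℝ)
    (hδ0 : 0 < δ) (hδ1 : δ ≤ 1)
    (I : Fin m → Ω → ℕ) (hImeas : ∀ j, Measurable (I j)) (hIbdd : ∀ j ω, I j ω ≤ 1)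
    (hIiid : iIndepFun I P)
    (hIlaw : ∀ j, P {ω | I j ω = 1} = ENNReal.ofReal δ)
    (S : Ω → ℕ) (hS : ∀ ω, S ω = ∑ j, I j ω) :
    (∑ j, ∫ ω, (if S ω ≠ 0 then (I j ω : ℝ) / (S ω : ℝ) ^ v else 0) ∂P)
        = ∫ ω, (if S ω ≠ 0 then (1 : ℝ) / (S ω : ℝ) ^ (v - 1) else 0) ∂P ∧
      ∫ ω, (if S ω ≠ 0 then (1 : ℝ) / (S ω : ℝ) ^ (v - 1) else 0) ∂P
        ≤ (v.factorial * m.factorial : ℝ) / ((m + v - 1).factorial * δ ^ (v - 1)) :=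
  bernoulli_sum_inverse_moment_general P m v hv δ hδ0 hδ1 I hImeas hIbdd hIiid hIlaw S hS
end
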